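/- Let k be a differential field of characteristic zero. Every nonzero proper prime differential ideal of the differential polynomial ring k{x} is of the form I(P) for some irreducible differential polynomial P ∈ k{x}, where I(P) is the set of all Q ∈ k{x} such that S_P^m · Q ∈ ⟨P⟩ for some natural number m. -/

import Mathlib

/-!
Let `N` be the least order of a nonzero element of `I`, and `P ∈ I` a prime of least degree in
`x^(N)` among the nonzero elements of `I` of order `≤ N`. For `j ≥ 1`, `D^j P` is linear in
`x^(N+j)` with leading coefficient the separant `S = ∂P/∂x^(N)`, so pseudo-dividing by
`D^j P, …, D P` brings `S^a Q` modulo `⟨P⟩` down to order `≤ N`. A further pseudo-division by `P`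
in `x^(N)` leaves a remainder in `I` of smaller degree, hence zero; as `P` is prime and does not
divide the leading coefficient, `P` divides what is left, so `I ⊆ I(P)`. Conversely `S ∉ I` by
the minimality of the degree of `P`, and `I` is prime.
-/

open MvPolynomial Set

namespace MvPolynomial

variable {σ R : Type*}

section CommSemiring

variable [CommSemiring R]

theorem degreeOf_monomial_le (i : σ) (t : σ →₀ ℕ) (c : R) :
    degreeOf i (monomial t c) ≤ t i := by
  rcases eq_or_ne c 0 with rfl | hc
  · simp
  · rw [degreeOf_monomial_eq _ _ hc]

theorem vars_monomial_subset (t : σ →₀ ℕ) (c : R) : (monomial t c).vars ⊆ t.support := by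
  rcases eq_or_ne c 0 with rfl | hc
  · simp
  · rw [vars_monomial hc]

theorem degreeOf_X_pow_le (i : σ) (k : ℕ) : degreeOf i (X i ^ k : MvPolynomial σ R) ≤ k := by
  rw [X_pow_eq_monomial]
  exact (degreeOf_monomial_le _ _ _).trans (by simp)

theorem mem_supported_of_vars_subset {s : Set σ} {p q : MvPolynomial σ R} (h : p.vars ⊆ q.vars)
    (hq : q ∈ supported R s) : p ∈ supported R s :=
  mem_supported.2 ((Finset.coe_subset.2 h).trans (mem_supported.1 hq))

theorem exists_eq_mul_X_pow_add {i : σ} {Q : MvPolynomial σ R} (hQ : 0 < degreeOf i Q) :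
    ∃ lead rest : MvPolynomial σ R, Q = lead * X i ^ degreeOf i Q + rest ∧
      degreeOf i lead = 0 ∧ degreeOf i rest < degreeOf i Q ∧
      lead.vars ⊆ Q.vars ∧ rest.vars ⊆ Q.vars := by
  classical
  set d := degreeOf i Q
  have hvars : ∀ t ∈ Q.support, ∀ u : σ →₀ ℕ, u.support ⊆ t.support →
      (monomial u (coeff t Q)).vars ⊆ Q.vars :=
    fun t ht u hu j hj => (mem_vars_iff_mem_support j).2
      ⟨t, ht, hu (vars_monomial_subset _ _ hj)⟩
  refine ⟨∑ t ∈ Q.support.filter (· i = d), monomial (t.erase i) (coeff t Q),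
    ∑ t ∈ Q.support.filter (· i ≠ d), monomial t (coeff t Q), ?_, ?_, ?_, ?_, ?_⟩
  · have htop : (∑ t ∈ Q.support.filter (· i = d), monomial (t.erase i) (coeff t Q)) * X i ^ d =
        ∑ t ∈ Q.support.filter (· i = d), monomial t (coeff t Q) := by
      rw [Finset.sum_mul]
      refine Finset.sum_congr rfl fun t ht => ?_
      rw [X_pow_eq_monomial, monomial_mul, mul_one, ← (Finset.mem_filter.1 ht).2,
        Finsupp.erase_add_single]
    rw [htop, Finset.sum_filter_add_sum_filter_not, support_sum_monomial_coeff]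
  · refine Nat.eq_zero_of_le_zero ((degreeOf_sum_le _ _ _).trans (Finset.sup_le fun t _ => ?_))
    exact (degreeOf_monomial_le _ _ _).trans (by simp)
  · refine (degreeOf_sum_le _ _ _).trans_lt ((Finset.sup_lt_iff hQ).2 fun t ht => ?_)
    have ht' := Finset.mem_filter.1 ht
    exact (degreeOf_monomial_le _ _ _).trans_lt
      (lt_of_le_of_ne (monomial_le_degreeOf i ht'.1) ht'.2)
  · refine (vars_sum_subset _ _).trans (Finset.biUnion_subset.2 fun t ht => ?_)
    exact hvars t (Finset.mem_filter.1 ht).1 _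
      (by rw [Finsupp.support_erase]; exact Finset.erase_subset _ _)
  · refine (vars_sum_subset _ _).trans (Finset.biUnion_subset.2 fun t ht => ?_)
    exact hvars t (Finset.mem_filter.1 ht).1 _ subset_rfl

theorem vars_pderiv_subset (i : σ) (p : MvPolynomial σ R) : (pderiv i p).vars ⊆ p.vars := by
  classical
  intro j hj
  obtain ⟨m, hm, hjm⟩ := (mem_vars_iff_mem_support j).1 hj
  rw [mem_support_iff, coeff_pderiv] at hm
  exact (mem_vars_iff_mem_support j).2 ⟨m + Finsupp.single i 1,
    mem_support_iff.2 (left_ne_zero_of_mul hm), Finsupp.support_mono le_self_add hjm⟩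

theorem pderiv_mem_supported {s : Set σ} {p : MvPolynomial σ R} (hp : p ∈ supported R s)
    (i : σ) : pderiv i p ∈ supported R s :=
  mem_supported.2 ((Finset.coe_subset.2 (vars_pderiv_subset i p)).trans (mem_supported.1 hp))

theorem degreeOf_pderiv_lt {i : σ} {p : MvPolynomial σ R} (hp : 0 < degreeOf i p) :
    degreeOf i (pderiv i p) < degreeOf i p := by
  refine (degreeOf_lt_iff hp).2 fun m hm => ?_
  rw [mem_support_iff, coeff_pderiv] at hm
  have := monomial_le_degreeOf i (mem_support_iff.2 (left_ne_zero_of_mul hm))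
  simp only [Finsupp.coe_add, Pi.add_apply, Finsupp.single_eq_same] at this
  omega

theorem pderiv_ne_zero [NoZeroDivisors R] [CharZero R] {i : σ} {p : MvPolynomial σ R}
    (hp : i ∈ p.vars) : pderiv i p ≠ 0 := by
  obtain ⟨t, ht, hit⟩ := (mem_vars_iff_mem_support i).1 hp
  have hle : Finsupp.single i 1 ≤ t := Finsupp.single_le_iff.2 (Nat.one_le_iff_ne_zero.2
    (Finsupp.mem_support_iff.1 hit))
  refine ne_zero_iff.2 ⟨t - Finsupp.single i 1, ?_⟩
  rw [coeff_pderiv, tsub_add_cancel_of_le hle]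
  exact mul_ne_zero (mem_support_iff.1 ht) (Nat.cast_add_one_ne_zero _)

theorem degreeOf_eq_zero_of_mem_supported {s : Set σ} {p : MvPolynomial σ R}
    (hp : p ∈ supported R s) {i : σ} (hi : i ∉ s) : degreeOf i p = 0 := by
  by_contra h
  exact hi (mem_supported.1 hp (mem_vars_iff_degreeOf_ne_zero.2 h))

theorem mem_supported_diff_singleton {s : Set σ} {p : MvPolynomial σ R}
    (hp : p ∈ supported R s) {i : σ} (hi : degreeOf i p = 0) : p ∈ supported R (s \ {i}) :=
  mem_supported.2 fun j hj => ⟨mem_supported.1 hp hj, fun (h : j = i) =>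
    mem_vars_iff_degreeOf_ne_zero.1 (h ▸ hj) hi⟩

end CommSemiring

section CommRing

variable [CommRing R]

theorem exists_pseudo_remainder {s : Set σ} {i : σ} (hi : i ∈ s) {c g : MvPolynomial σ R}
    {d : ℕ} (hc : c ∈ supported R s) (hci : degreeOf i c = 0) (hg : g ∈ supported R s)
    (hgi : degreeOf i g < d) {Q : MvPolynomial σ R} (hQ : Q ∈ supported R s) :
    ∃ (a : ℕ) (r : MvPolynomial σ R), r ∈ supported R s ∧ degreeOf i r < d ∧
      c ^ a * Q - r ∈ Ideal.span {c * X i ^ d + g} := by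
  induction hQi : degreeOf i Q using Nat.strong_induction_on generalizing Q with
  | _ e ih =>
  by_cases hed : e < d
  · exact ⟨0, Q, hQ, hQi ▸ hed, by simp⟩
  obtain ⟨f, rfl⟩ : ∃ f, e = f + d := ⟨e - d, by omega⟩
  obtain ⟨lead, rest, hQeq, hlead, hrest, hleadv, hrestv⟩ :=
    exists_eq_mul_X_pow_add (i := i) (Q := Q) (by omega)
  rw [hQi] at hQeq hrest
  have hX : X i ∈ supported R s := Algebra.subset_adjoin (Set.mem_image_of_mem X hi)
  have hQ' : c * rest - lead * X i ^ f * g ∈ supported R s :=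
    sub_mem (mul_mem hc (mem_supported_of_vars_subset hrestv hQ))
      (mul_mem (mul_mem (mem_supported_of_vars_subset hleadv hQ) (pow_mem hX f)) hg)
  have hQ'i : degreeOf i (c * rest - lead * X i ^ f * g) < f + d := by
    have h₁ := degreeOf_mul_le i c rest
    have h₂ := degreeOf_mul_le i (lead * X i ^ f) g
    have h₃ := degreeOf_mul_le i lead (X i ^ f)
    have h₄ := degreeOf_X_pow_le (R := R) i f
    have h₅ := degreeOf_sub_le i (c * rest) (lead * X i ^ f * g)
    omega
  obtain ⟨a, r, hr, hri, hmem⟩ := ih _ hQ'i hQ' rfl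
  refine ⟨a + 1, r, hr, hri, ?_⟩
  have hdiv : c ^ (a + 1) * Q - r = c ^ a * lead * X i ^ f * (c * X i ^ d + g) +
      (c ^ a * (c * rest - lead * X i ^ f * g) - r) := by
    rw [hQeq]; ring
  rw [hdiv]
  exact add_mem (Ideal.mul_mem_left _ _ (Ideal.mem_span_singleton_self _)) hmem

theorem dvd_of_mem_of_degreeOf_minimal {I : Ideal (MvPolynomial σ R)} {s : Set σ} {i : σ}
    (hi : i ∈ s) {P : MvPolynomial σ R} (hP : Prime P) (hPI : P ∈ I) (hPs : P ∈ supported R s)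
    (hPi : 0 < degreeOf i P)
    (hmin : ∀ Q ∈ I, Q ∈ supported R s → degreeOf i Q < degreeOf i P → Q = 0)
    {Q : MvPolynomial σ R} (hQI : Q ∈ I) (hQs : Q ∈ supported R s) : P ∣ Q := by
  obtain ⟨lc, g, hPeq, hlc, hg, hlcv, hgv⟩ := exists_eq_mul_X_pow_add hPi
  have hlcs := mem_supported_of_vars_subset hlcv hPs
  obtain ⟨a, r, hr, hri, hmem⟩ :=
    exists_pseudo_remainder hi hlcs hlc (mem_supported_of_vars_subset hgv hPs) hg hQs
  rw [← hPeq, Ideal.mem_span_singleton] at hmem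
  have hrI : r ∈ I := by
    simpa using I.sub_mem (I.mul_mem_left (lc ^ a) hQI) (I.mem_of_dvd hmem hPI)
  rw [hmin r hrI hr hri, sub_zero] at hmem
  refine (hP.dvd_or_dvd hmem).resolve_left fun hlcP => ?_
  have hlc0 : lc = 0 :=
    hmin lc (I.mem_of_dvd (hP.dvd_of_dvd_pow hlcP) hPI) hlcs (hlc ▸ hPi)
  rw [hlc0, zero_mul, zero_add] at hPeq
  exact (hPeq ▸ hg).false

end CommRing

section IsDomain

variable [CommRing R] [IsDomain R]

theorem vars_subset_of_dvd {p q : MvPolynomial σ R} (h : p ∣ q) (hq : q ≠ 0) :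
    p.vars ⊆ q.vars := by
  obtain ⟨b, rfl⟩ := h
  intro j hj
  rw [mem_vars_iff_degreeOf_ne_zero] at hj ⊢
  rw [degreeOf_mul_eq (left_ne_zero_of_mul hq) (right_ne_zero_of_mul hq)]
  omega

theorem degreeOf_le_of_dvd (i : σ) {p q : MvPolynomial σ R} (h : p ∣ q) (hq : q ≠ 0) :
    degreeOf i p ≤ degreeOf i q := by
  obtain ⟨b, rfl⟩ := h
  rw [degreeOf_mul_eq (left_ne_zero_of_mul hq) (right_ne_zero_of_mul hq)]
  omega

end IsDomain

end MvPolynomial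

theorem Ideal.IsPrime.exists_prime_dvd_mem {A : Type*} [CommSemiring A]
    [UniqueFactorizationMonoid A] {I : Ideal A} (hI : I.IsPrime) {a : A} (haI : a ∈ I)
    (ha : a ≠ 0) : ∃ p, Prime p ∧ p ∣ a ∧ p ∈ I := by
  obtain ⟨u, hu⟩ := UniqueFactorizationMonoid.factors_prod ha
  rw [← hu, Ideal.mul_unit_mem_iff_mem _ u.isUnit] at haI
  obtain ⟨p, hp, hpI⟩ := (hI.multiset_prod_mem_iff_exists_mem _).1 haI
  exact ⟨p, UniqueFactorizationMonoid.prime_of_factor p hp,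
    (Multiset.dvd_prod hp).trans ⟨u, hu.symm⟩, hpI⟩

theorem exists_prime_mem_degreeOf_minimal {k : Type*} [Field k] {I : Ideal (MvPolynomial ℕ k)}
    (hI : I.IsPrime) (hI0 : I ≠ ⊥) :
    ∃ (P : MvPolynomial ℕ k) (N : ℕ), Prime P ∧ P ∈ I ∧ P ∈ supported k (Iic N) ∧
      0 < degreeOf N P ∧
      ∀ Q ∈ I, Q ∈ supported k (Iic N) → degreeOf N Q < degreeOf N P → Q = 0 := by
  classical
  have hex : ∃ n, ∃ Q ∈ I, Q ≠ 0 ∧ Q ∈ supported k (Iic n) := by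
    obtain ⟨Q, hQI, hQ0⟩ := Submodule.exists_mem_ne_zero_of_ne_bot hI0
    exact ⟨Q.vars.sup id, Q, hQI, hQ0, mem_supported.2 fun j hj => Finset.le_sup (f := id) hj⟩
  set N := Nat.find hex
  have hpos : ∀ Q ∈ I, Q ≠ 0 → Q ∈ supported k (Iic N) → 0 < degreeOf N Q := by
    intro Q hQI hQ0 hQN
    by_contra! h
    have hQ := mem_supported_diff_singleton hQN (Nat.le_zero.1 h)
    rw [Iic_sdiff_right] at hQ
    rcases hN' : N with _ | n
    · rw [hN', Iio_zero_eq_empty, supported_empty] at hQ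
      obtain ⟨c, rfl⟩ := Algebra.mem_bot.1 hQ
      exact hI.ne_top (I.eq_top_of_isUnit_mem hQI
        ((Ne.isUnit fun hc => hQ0 (by simp [hc])).map _))
    · rw [hN', Iio_add_one_eq_Iic] at hQ
      exact Nat.find_min hex (show n < N by omega) ⟨Q, hQI, hQ0, hQ⟩
  obtain ⟨P₁, ⟨hP₁I, hP₁0, hP₁N⟩, hmin⟩ := (measure fun Q => degreeOf N Q).wf.has_min
    {Q | Q ∈ I ∧ Q ≠ 0 ∧ Q ∈ supported k (Iic N)} (Nat.find_spec hex)
  obtain ⟨P, hP, hPdvd, hPI⟩ := hI.exists_prime_dvd_mem hP₁I hP₁0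
  have hPN := mem_supported_of_vars_subset (vars_subset_of_dvd hPdvd hP₁0) hP₁N
  refine ⟨P, N, hP, hPI, hPN, hpos P hPI hP.ne_zero hPN, fun Q hQI hQN hQ => ?_⟩
  by_contra hQ0
  exact hmin Q ⟨hQI, hQ0, hQN⟩ (hQ.trans_le (degreeOf_le_of_dvd N hPdvd hP₁0))

section DiffPoly

variable {k : Type*}

structure IsDiffPolyDerivation [CommRing k] (δ : k → k)
    (D : MvPolynomial ℕ k → MvPolynomial ℕ k) : Prop where
  map_add : ∀ p q, D (p + q) = D p + D q
  leibniz : ∀ p q, D (p * q) = p * D q + q * D p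
  map_C : ∀ a, D (C a) = C (δ a)
  map_X : ∀ n, D (X n) = X (n + 1)

namespace IsDiffPolyDerivation

variable [CommRing k] {δ : k → k} {D : MvPolynomial ℕ k → MvPolynomial ℕ k}
  (hD : IsDiffPolyDerivation δ D)
include hD

theorem sub_pderiv_mul_X_mem_supported {M : ℕ} {p : MvPolynomial ℕ k}
    (hp : p ∈ supported k (Iic M)) : D p - pderiv M p * X (M + 1) ∈ supported k (Iic M) := by
  induction hp using Algebra.adjoin_induction with
  | mem x hx =>
    obtain ⟨j, hj, rfl⟩ := hx
    rw [hD.map_X]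
    rcases eq_or_ne j M with rfl | hjM
    · simp
    · rw [pderiv_X_of_ne hjM, zero_mul, sub_zero]
      exact Algebra.subset_adjoin ⟨j + 1, Nat.succ_le_of_lt (lt_of_le_of_ne hj hjM), rfl⟩
  | algebraMap a =>
    rw [algebraMap_eq, hD.map_C, pderiv_C, zero_mul, sub_zero, ← algebraMap_eq]
    exact Subalgebra.algebraMap_mem _ _
  | add p q _ _ hp hq =>
    have h : D (p + q) - pderiv M (p + q) * X (M + 1) =
        (D p - pderiv M p * X (M + 1)) + (D q - pderiv M q * X (M + 1)) := by
      rw [hD.map_add, _root_.map_add]; ring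
    exact h ▸ add_mem hp hq
  | mul p q hp' hq' hp hq =>
    have h : D (p * q) - pderiv M (p * q) * X (M + 1) =
        p * (D q - pderiv M q * X (M + 1)) + q * (D p - pderiv M p * X (M + 1)) := by
      rw [hD.leibniz, pderiv_mul]; ring
    exact h ▸ add_mem (mul_mem hp' hq) (mul_mem hq' hp)

theorem mem_supported_succ {M : ℕ} {p : MvPolynomial ℕ k} (hp : p ∈ supported k (Iic M)) :
    D p ∈ supported k (Iic (M + 1)) := by
  have hmono := supported_mono (R := k) (Iic_subset_Iic.2 M.le_succ)
  rw [← sub_add_cancel (D p) (pderiv M p * X (M + 1))]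
  exact add_mem (hmono (hD.sub_pderiv_mul_X_mem_supported hp)) (mul_mem
    (hmono (pderiv_mem_supported hp M)) (Algebra.subset_adjoin ⟨M + 1, self_mem_Iic, rfl⟩))

theorem iterate_sub_pderiv_mul_X_mem_supported {N : ℕ} {P : MvPolynomial ℕ k}
    (hP : P ∈ supported k (Iic N)) (j : ℕ) :
    D^[j + 1] P - pderiv N P * X (N + j + 1) ∈ supported k (Iic (N + j)) := by
  induction j with
  | zero => simpa using hD.sub_pderiv_mul_X_mem_supported hP
  | succ j ih =>
    have hDS : D (pderiv N P) ∈ supported k (Iic (N + j + 1)) := supported_mono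
      (Iic_subset_Iic.2 (by omega)) (hD.mem_supported_succ (pderiv_mem_supported hP N))
    have hX : (X (N + j + 1) : MvPolynomial ℕ k) ∈ supported k (Iic (N + j + 1)) :=
      Algebra.subset_adjoin ⟨N + j + 1, self_mem_Iic, rfl⟩
    have h : D^[j + 1 + 1] P - pderiv N P * X (N + (j + 1) + 1) =
        X (N + j + 1) * D (pderiv N P) + D (D^[j + 1] P - pderiv N P * X (N + j + 1)) := by
      rw [Function.iterate_succ_apply', show N + (j + 1) + 1 = N + j + 1 + 1 by omega]
      conv_lhs => rw [← sub_add_cancel (D^[j + 1] P) (pderiv N P * X (N + j + 1))]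
      rw [hD.map_add, hD.leibniz, hD.map_X]
      ring
    exact h ▸ add_mem (mul_mem hX hDS) (hD.mem_supported_succ ih)

theorem exists_pow_pderiv_mul_sub_mem_span_iterate {N : ℕ} {P : MvPolynomial ℕ k}
    (hP : P ∈ supported k (Iic N)) (j : ℕ) {Q : MvPolynomial ℕ k}
    (hQ : Q ∈ supported k (Iic (N + j))) :
    ∃ (a : ℕ), ∃ r ∈ supported k (Iic N),
      pderiv N P ^ a * Q - r ∈ Ideal.span {R | ∃ i : ℕ, R = D^[i] P} := by
  induction j generalizing Q with
  | zero => exact ⟨0, Q, hQ, by simp⟩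
  | succ j ih =>
    rw [← add_assoc] at hQ
    have hM : N + j + 1 ∉ Iic (N + j) := by simp
    have hT := hD.iterate_sub_pderiv_mul_X_mem_supported hP j
    have hS := pderiv_mem_supported hP N
    have hmono := supported_mono (R := k) (Iic_subset_Iic.2 (by omega : N ≤ N + j + 1))
    obtain ⟨a, r, hr, hri, hmem⟩ := exists_pseudo_remainder (mem_Iic.2 le_rfl) (hmono hS)
      (degreeOf_eq_zero_of_mem_supported hS (by simp))
      (supported_mono (Iic_subset_Iic.2 (by omega)) hT)
      (by rw [degreeOf_eq_zero_of_mem_supported hT hM]; exact zero_lt_one) hQ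
    have hr' := mem_supported_diff_singleton hr (Nat.lt_one_iff.1 hri)
    rw [Iic_sdiff_right, Iio_add_one_eq_Iic] at hr'
    obtain ⟨b, r', hr'N, hmem'⟩ := ih hr'
    refine ⟨b + a, r', hr'N, ?_⟩
    have hG : pderiv N P * X (N + j + 1) ^ 1 + (D^[j + 1] P - pderiv N P * X (N + j + 1)) ∈
        Ideal.span {R | ∃ i : ℕ, R = D^[i] P} := by
      rw [pow_one, add_sub_cancel]
      exact Ideal.subset_span ⟨j + 1, rfl⟩
    have hsplit : pderiv N P ^ (b + a) * Q - r' =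
        pderiv N P ^ b * (pderiv N P ^ a * Q - r) + (pderiv N P ^ b * r - r') := by ring
    rw [hsplit]
    exact add_mem (Ideal.mul_mem_left _ _ (Ideal.span_singleton_le_iff_mem _ |>.2 hG hmem)) hmem'

end IsDiffPolyDerivation

end DiffPoly

theorem prime_differential_ideal_eq_separant_saturation_general
    {k : Type*} [Field k] [CharZero k]
    (δ : k → k)
    (D : MvPolynomial ℕ k → MvPolynomial ℕ k)
    (hDadd : ∀ p q, D (p + q) = D p + D q)
    (hDmul : ∀ p q, D (p * q) = p * D q + q * D p)
    (hDC : ∀ a : k, D (C a) = C (δ a))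
    (hDX : ∀ n : ℕ, D (X n) = X (n + 1))
    (I : Ideal (MvPolynomial ℕ k)) (hI0 : I ≠ ⊥) (hIprime : I.IsPrime)
    (hIdiff : ∀ Q ∈ I, D Q ∈ I) :
    ∃ (P : MvPolynomial ℕ k) (N : ℕ),
      Irreducible P ∧ N ∈ P.vars ∧ (∀ m ∈ P.vars, m ≤ N) ∧
      (I : Set (MvPolynomial ℕ k)) =
        {Q | ∃ m : ℕ, (pderiv N P) ^ m * Q ∈ Ideal.span {R | ∃ j : ℕ, R = D^[j] P}} := by
  have hD : IsDiffPolyDerivation δ D := ⟨hDadd, hDmul, hDC, hDX⟩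
  obtain ⟨P, N, hP, hPI, hPN, hPpos, hmin⟩ := exists_prime_mem_degreeOf_minimal hIprime hI0
  set J := Ideal.span {R | ∃ j : ℕ, R = D^[j] P}
  have hJI : J ≤ I := Ideal.span_le.2 <| by
    rintro _ ⟨j, rfl⟩
    induction j with
    | zero => exact hPI
    | succ j ih => exact Function.iterate_succ_apply' D j P ▸ hIdiff _ ih
  have hNP : N ∈ P.vars := mem_vars_iff_degreeOf_ne_zero.2 hPpos.ne'
  have hSI : pderiv N P ∉ I := fun hS => pderiv_ne_zero hNP
    (hmin _ hS (pderiv_mem_supported hPN N) (degreeOf_pderiv_lt hPpos))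
  refine ⟨P, N, hP.irreducible, hNP, fun m hm => mem_supported.1 hPN hm,
    Set.ext fun Q => ⟨fun hQ => ?_, ?_⟩⟩
  · have hQN : Q ∈ supported k (Iic (N + Q.vars.sup id)) := mem_supported.2 fun j hj =>
      (Finset.le_sup (f := id) hj).trans (Nat.le_add_left _ N)
    obtain ⟨a, r, hr, hQr⟩ := hD.exists_pow_pderiv_mul_sub_mem_span_iterate hPN _ hQN
    have hrI : r ∈ I := by simpa using I.sub_mem (I.mul_mem_left (pderiv N P ^ a) hQ) (hJI hQr)
    obtain ⟨w, rfl⟩ := dvd_of_mem_of_degreeOf_minimal self_mem_Iic hP hPI hPN hPpos hmin hrI hr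
    exact ⟨a, by simpa using J.add_mem hQr (J.mul_mem_right w (Ideal.subset_span ⟨0, rfl⟩))⟩
  · rintro ⟨m, hm⟩
    exact (hIprime.mem_or_mem (hJI hm)).resolve_left fun h => hSI (hIprime.mem_of_pow_mem m h)

/-- Every nonzero (proper) prime differential ideal of the differential
polynomial ring `k{x}` (modelled as `MvPolynomial ℕ k`, where the variable `n` stands for
`x^(n)`, with derivation `D` extending the derivation `δ` of `k` and sending `x^(n)` to
`x^(n+1)`) is of the form `I(P) = {Q | ∃ m, S_P ^ m * Q ∈ ⟨P⟩}` for some irreducible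
differential polynomial `P` (of some order `N ≥ 0`), where `S_P = ∂P/∂x^(N)` is the
separant of `P` and `⟨P⟩` is the smallest differential ideal containing `P`, i.e. the
ideal spanned by the iterated derivatives of `P`. -/
theorem prime_differential_ideal_eq_separant_saturation
    {k : Type*} [Field k] [CharZero k]
    (δ : k → k)
    (hδadd : ∀ x y, δ (x + y) = δ x + δ y)
    (hδmul : ∀ x y, δ (x * y) = x * δ y + y * δ x)
    (D : MvPolynomial ℕ k → MvPolynomial ℕ k)
    (hDadd : ∀ p q, D (p + q) = D p + D q)
    (hDmul : ∀ p q, D (p * q) = p * D q + q * D p)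
    (hDC : ∀ a : k, D (C a) = C (δ a))
    (hDX : ∀ n : ℕ, D (X n) = X (n + 1))
    (I : Ideal (MvPolynomial ℕ k)) (hI0 : I ≠ ⊥) (hIprime : I.IsPrime)
    (hIdiff : ∀ Q ∈ I, D Q ∈ I) :
    ∃ (P : MvPolynomial ℕ k) (N : ℕ),
      Irreducible P ∧ N ∈ P.vars ∧ (∀ m ∈ P.vars, m ≤ N) ∧
      (I : Set (MvPolynomial ℕ k)) =
        {Q | ∃ m : ℕ, (pderiv N P) ^ m * Q ∈ Ideal.span {R | ∃ j : ℕ, R = D^[j] P}} :=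
  prime_differential_ideal_eq_separant_saturation_general δ D hDadd hDmul hDC hDX I hI0 hIprime
    hIdiff
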